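/- Under the assumptions: (i) I(Y;X_s|Z_s)=0 with Z_s a deterministic function of X_s; (ii) Z_sr = Z_s (almost surely); (iii) I(Z_se; Z_sr) = 0; it follows that I(Z_se; Y | X_s) ≥ I(Z_se; Y). -/

import Mathlib

/-! Write `Z_s := f ∘ X_s`. As `Z_s` is a function of `X_s` and `I(Y; X_s | Z_s) = 0`, the two
chain-rule expansions of `I(Y; (Z_se, X_s) | Z_s)` give `I(Z_se; Y | Z_s) ≤ I(Z_se; Y | X_s)`.
As `Z_sr = Z_s` almost surely, `I(Z_se; Z_s) = 0`, and the two expansions of `I(Z_se; (Y, Z_s))`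
give `I(Z_se; Y) ≤ I(Z_se; Y | Z_s)`. Both steps are entropy bookkeeping plus the nonnegativity
of conditional mutual information, which is Gibbs' inequality `q - r ≤ q log (q / r)` summed
against the conditionally independent law `q(a,c) q(b,c) / q(c)`. -/

open Finset

/-- Pushforward pmf of `p` under the map `f` (finite setting). -/
noncomputable def pmfMap {Ω α : Type*} [Fintype Ω] [DecidableEq α]
    (p : Ω → ℝ) (f : Ω → α) : α → ℝ :=
  fun a => ∑ ω, if f ω = a then p ω else 0

/-- Shannon entropy (natural log) of the random variable `f` under `p`. -/
noncomputable def entropy {Ω α : Type*} [Fintype Ω] [Fintype α] [DecidableEq α]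
    (p : Ω → ℝ) (f : Ω → α) : ℝ :=
  -∑ a, pmfMap p f a * Real.log (pmfMap p f a)

/-- Conditional entropy H(f | g). -/
noncomputable def condEntropy {Ω α β : Type*} [Fintype Ω] [Fintype α] [Fintype β]
    [DecidableEq α] [DecidableEq β] (p : Ω → ℝ) (f : Ω → α) (g : Ω → β) : ℝ :=
  -∑ a, ∑ b, pmfMap p (fun ω => (f ω, g ω)) (a, b) *
      Real.log (pmfMap p (fun ω => (f ω, g ω)) (a, b) / pmfMap p g b)

/-- Mutual information I(f ; g). -/
noncomputable def mutualInfo {Ω α β : Type*} [Fintype Ω] [Fintype α] [Fintype β]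
    [DecidableEq α] [DecidableEq β] (p : Ω → ℝ) (f : Ω → α) (g : Ω → β) : ℝ :=
  ∑ a, ∑ b, pmfMap p (fun ω => (f ω, g ω)) (a, b) *
      Real.log (pmfMap p (fun ω => (f ω, g ω)) (a, b) / (pmfMap p f a * pmfMap p g b))

/-- Conditional mutual information I(f ; g | h). -/
noncomputable def condMutualInfo {Ω α β γ : Type*} [Fintype Ω] [Fintype α] [Fintype β] [Fintype γ]
    [DecidableEq α] [DecidableEq β] [DecidableEq γ]
    (p : Ω → ℝ) (f : Ω → α) (g : Ω → β) (h : Ω → γ) : ℝ :=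
  ∑ a, ∑ b, ∑ c, pmfMap p (fun ω => (f ω, g ω, h ω)) (a, b, c) *
      Real.log ((pmfMap p (fun ω => (f ω, g ω, h ω)) (a, b, c) * pmfMap p h c) /
        (pmfMap p (fun ω => (f ω, h ω)) (a, c) * pmfMap p (fun ω => (g ω, h ω)) (b, c)))

/-- Interaction information I(f ; g ; h) := I(f;g) - I(f;g|h). -/
noncomputable def interactionInfo {Ω α β γ : Type*} [Fintype Ω] [Fintype α] [Fintype β] [Fintype γ]
    [DecidableEq α] [DecidableEq β] [DecidableEq γ]
    (p : Ω → ℝ) (f : Ω → α) (g : Ω → β) (h : Ω → γ) : ℝ :=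
  mutualInfo p f g - condMutualInfo p f g h

/-- A pmf on a finite type. -/
def IsPmf {Ω : Type*} [Fintype Ω] (p : Ω → ℝ) : Prop :=
  (∀ ω, 0 ≤ p ω) ∧ ∑ ω, p ω = 1


section Pmf

variable {Ω α β : Type*} [Fintype Ω] [DecidableEq α] {p : Ω → ℝ}

lemma pmfMap_nonneg (hp : ∀ ω, 0 ≤ p ω) (X : Ω → α) (a : α) : 0 ≤ pmfMap p X a :=
  Finset.sum_nonneg fun ω _ => by split_ifs <;> simp [hp ω]

lemma le_pmfMap_apply (hp : ∀ ω, 0 ≤ p ω) (X : Ω → α) (ω : Ω) : p ω ≤ pmfMap p X (X ω) := by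
  simpa [pmfMap] using Finset.single_le_sum (f := fun ω' => if X ω' = X ω then p ω' else 0)
    (fun ω' _ => by split_ifs <;> simp [hp ω']) (Finset.mem_univ ω)

lemma pmfMap_apply_pos (hp : ∀ ω, 0 ≤ p ω) (X : Ω → α) {ω : Ω} (hω : 0 < p ω) :
    0 < pmfMap p X (X ω) :=
  hω.trans_le (le_pmfMap_apply hp X ω)

lemma sum_pmfMap_mul [Fintype α] (p : Ω → ℝ) (X : Ω → α) (φ : α → ℝ) :
    ∑ a, pmfMap p X a * φ a = ∑ ω, p ω * φ (X ω) := by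
  simp only [pmfMap, Finset.sum_mul, ite_mul, zero_mul]
  rw [Finset.sum_comm]
  simp

lemma sum_pmfMap [Fintype α] (p : Ω → ℝ) (X : Ω → α) : ∑ a, pmfMap p X a = ∑ ω, p ω := by
  simpa using sum_pmfMap_mul p X fun _ => 1

lemma sum_pmfMap_prod_fst [Fintype α] [DecidableEq β] (p : Ω → ℝ) (X : Ω → α) (W : Ω → β)
    (b : β) : ∑ a, pmfMap p (fun ω => (X ω, W ω)) (a, b) = pmfMap p W b := by
  simp only [pmfMap, Prod.ext_iff]
  rw [Finset.sum_comm]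
  simp [ite_and]

lemma pmfMap_comp_apply_of_injective [DecidableEq β] {e : α → β} (he : Function.Injective e)
    (p : Ω → ℝ) (X : Ω → α) (a : α) : pmfMap p (fun ω => e (X ω)) (e a) = pmfMap p X a := by
  simp only [pmfMap, he.eq_iff]

lemma pmfMap_le_pmfMap_comp [DecidableEq β] (hp : ∀ ω, 0 ≤ p ω) (X : Ω → α) (φ : α → β)
    (a : α) : pmfMap p X a ≤ pmfMap p (fun ω => φ (X ω)) (φ a) :=
  Finset.sum_le_sum fun ω _ => by
    by_cases h : X ω = a
    · simp [h]
    · simp only [h, if_false]; split_ifs <;> simp [hp ω]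

lemma pmfMap_congr_ae (hp : ∀ ω, 0 ≤ p ω) {X X' : Ω → α} (h : ∀ ω, 0 < p ω → X ω = X' ω) :
    pmfMap p X = pmfMap p X' := by
  funext a
  refine Finset.sum_congr rfl fun ω _ => ?_
  rcases (hp ω).eq_or_lt with h0 | h0
  · simp [← h0]
  · rw [h ω h0]

end Pmf

lemma sub_le_mul_log_div {q r : ℝ} (hq : 0 ≤ q) (hr : 0 ≤ r) (hqr : 0 < q → 0 < r) :
    q - r ≤ q * Real.log (q / r) := by
  rcases hq.eq_or_lt with rfl | hq
  · simpa using hr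
  have hr := hqr hq
  have hlog := Real.one_sub_inv_le_log_of_pos (div_pos hq hr)
  rw [inv_div] at hlog
  calc q - r = q * (1 - r / q) := by field_simp
    _ ≤ q * Real.log (q / r) := mul_le_mul_of_nonneg_left hlog hq.le

section Entropy

variable {Ω α β γ : Type*} [Fintype Ω] [Fintype α] [Fintype β] [Fintype γ]
  [DecidableEq α] [DecidableEq β] [DecidableEq γ] {p : Ω → ℝ}

lemma entropy_eq_sum (p : Ω → ℝ) (X : Ω → α) :
    entropy p X = -∑ ω, p ω * Real.log (pmfMap p X (X ω)) := by
  rw [entropy, sum_pmfMap_mul p X fun a => Real.log (pmfMap p X a)]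

lemma entropy_comp_of_injective {e : α → β} (he : Function.Injective e) (p : Ω → ℝ)
    (X : Ω → α) : entropy p (fun ω => e (X ω)) = entropy p X := by
  simp only [entropy_eq_sum, pmfMap_comp_apply_of_injective he]

lemma mutualInfo_eq_entropy (hp : ∀ ω, 0 ≤ p ω) (X : Ω → α) (W : Ω → β) :
    mutualInfo p X W = entropy p X + entropy p W - entropy p (fun ω => (X ω, W ω)) := by
  have hsum := sum_pmfMap_mul p (fun ω => (X ω, W ω)) fun x =>
    Real.log (pmfMap p (fun ω => (X ω, W ω)) x / (pmfMap p X x.1 * pmfMap p W x.2))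
  rw [Fintype.sum_prod_type] at hsum
  simp only [mutualInfo, hsum, entropy_eq_sum, ← Finset.sum_neg_distrib, ← Finset.sum_sub_distrib,
    ← Finset.sum_add_distrib]
  refine Finset.sum_congr rfl fun ω _ => ?_
  rcases (hp ω).eq_or_lt with h0 | h0
  · simp [← h0]
  have := pmfMap_apply_pos hp X h0
  have := pmfMap_apply_pos hp W h0
  have := pmfMap_apply_pos hp (fun ω => (X ω, W ω)) h0
  rw [Real.log_div (by positivity) (by positivity), Real.log_mul (by positivity) (by positivity)]
  ring

lemma condMutualInfo_eq_entropy (hp : ∀ ω, 0 ≤ p ω) (X : Ω → α) (W : Ω → β) (V : Ω → γ) :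
    condMutualInfo p X W V = entropy p (fun ω => (X ω, V ω)) + entropy p (fun ω => (W ω, V ω))
      - entropy p (fun ω => (X ω, W ω, V ω)) - entropy p V := by
  have hsum := sum_pmfMap_mul p (fun ω => (X ω, W ω, V ω)) fun x =>
    Real.log (pmfMap p (fun ω => (X ω, W ω, V ω)) x * pmfMap p V x.2.2 /
      (pmfMap p (fun ω => (X ω, V ω)) (x.1, x.2.2) *
        pmfMap p (fun ω => (W ω, V ω)) (x.2.1, x.2.2)))
  simp only [Fintype.sum_prod_type] at hsum
  simp only [condMutualInfo, hsum, entropy_eq_sum, ← Finset.sum_neg_distrib,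
    ← Finset.sum_sub_distrib, ← Finset.sum_add_distrib]
  refine Finset.sum_congr rfl fun ω _ => ?_
  rcases (hp ω).eq_or_lt with h0 | h0
  · simp [← h0]
  have := pmfMap_apply_pos hp V h0
  have := pmfMap_apply_pos hp (fun ω => (X ω, V ω)) h0
  have := pmfMap_apply_pos hp (fun ω => (W ω, V ω)) h0
  have := pmfMap_apply_pos hp (fun ω => (X ω, W ω, V ω)) h0
  rw [Real.log_div (by positivity) (by positivity), Real.log_mul (by positivity) (by positivity),
    Real.log_mul (by positivity) (by positivity)]
  ring

lemma condMutualInfo_nonneg (hp : IsPmf p) (X : Ω → α) (W : Ω → β) (V : Ω → γ) :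
    0 ≤ condMutualInfo p X W V := by
  obtain ⟨hp0, hp1⟩ := hp
  set q := pmfMap p (fun ω => (X ω, W ω, V ω))
  set qXV := pmfMap p (fun ω => (X ω, V ω))
  set qWV := pmfMap p (fun ω => (W ω, V ω))
  set qV := pmfMap p V
  -- `r` is the law under which `X` and `W` are conditionally independent given `V`.
  set r : α → β → γ → ℝ := fun a b c => qXV (a, c) * qWV (b, c) / qV c
  have hterm (a b c) : q (a, b, c) - r a b c ≤
      q (a, b, c) * Real.log (q (a, b, c) * qV c / (qXV (a, c) * qWV (b, c))) := by
    rw [← div_div_eq_mul_div]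
    refine sub_le_mul_log_div (pmfMap_nonneg hp0 _ _) (div_nonneg (mul_nonneg
      (pmfMap_nonneg hp0 _ _) (pmfMap_nonneg hp0 _ _)) (pmfMap_nonneg hp0 _ _)) fun hq => ?_
    have hXV : q (a, b, c) ≤ qXV (a, c) :=
      pmfMap_le_pmfMap_comp hp0 _ (fun x : α × β × γ => (x.1, x.2.2)) _
    have hWV : q (a, b, c) ≤ qWV (b, c) :=
      pmfMap_le_pmfMap_comp hp0 _ (fun x : α × β × γ => (x.2.1, x.2.2)) _
    have hV : q (a, b, c) ≤ qV c := pmfMap_le_pmfMap_comp hp0 _ (fun x : α × β × γ => x.2.2) _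
    exact div_pos (mul_pos (hq.trans_le hXV) (hq.trans_le hWV)) (hq.trans_le hV)
  have hq_sum : ∑ a, ∑ b, ∑ c, q (a, b, c) = 1 := by
    simpa only [Fintype.sum_prod_type, hp1] using sum_pmfMap p (fun ω => (X ω, W ω, V ω))
  have hr_sum : ∑ a, ∑ b, ∑ c, r a b c = 1 := by
    calc ∑ a, ∑ b, ∑ c, r a b c = ∑ a, ∑ c, ∑ b, r a b c :=
          Finset.sum_congr rfl fun _ _ => Finset.sum_comm
      _ = ∑ c, ∑ a, ∑ b, r a b c := Finset.sum_comm
      _ = ∑ c, (∑ a, qXV (a, c)) * (∑ b, qWV (b, c)) / qV c := by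
          simp only [r, Finset.sum_mul_sum, Finset.sum_div]
      _ = ∑ c, qV c := by simp only [qXV, qWV, qV, sum_pmfMap_prod_fst, mul_self_div_self]
      _ = 1 := by rw [sum_pmfMap, hp1]
  calc 0 = ∑ a, ∑ b, ∑ c, (q (a, b, c) - r a b c) := by
        simp only [Finset.sum_sub_distrib, hq_sum, hr_sum, sub_self]
    _ ≤ condMutualInfo p X W V := by
        unfold condMutualInfo
        gcongr with a _ b _ c _
        exact hterm a b c

end Entropy

section Information

variable {Ω α β γ δ : Type*} [Fintype Ω] [Fintype α] [Fintype β] [Fintype γ] [Fintype δ]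
  [DecidableEq α] [DecidableEq β] [DecidableEq γ] [DecidableEq δ] {p : Ω → ℝ}

lemma mutualInfo_congr_ae_right (hp : ∀ ω, 0 ≤ p ω) (X : Ω → α) {W W' : Ω → β}
    (h : ∀ ω, 0 < p ω → W ω = W' ω) : mutualInfo p X W = mutualInfo p X W' := by
  rw [mutualInfo, mutualInfo, pmfMap_congr_ae hp h,
    pmfMap_congr_ae hp (X' := fun ω => (X ω, W' ω)) fun ω hω => by rw [h ω hω]]

lemma mutualInfo_le_condMutualInfo_of_mutualInfo_eq_zero (hp : IsPmf p) (X : Ω → α)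
    (W : Ω → β) {V : Ω → γ} (hXV : mutualInfo p X V = 0) :
    mutualInfo p X W ≤ condMutualInfo p X W V := by
  have hnonneg := condMutualInfo_nonneg hp X V W
  have hVW : entropy p (fun ω => (V ω, W ω)) = entropy p (fun ω => (W ω, V ω)) :=
    entropy_comp_of_injective Prod.swap_injective p fun ω => (W ω, V ω)
  have hXVW : entropy p (fun ω => (X ω, V ω, W ω)) = entropy p (fun ω => (X ω, W ω, V ω)) :=
    entropy_comp_of_injective (Function.injective_id.prodMap Prod.swap_injective) p
      fun ω => (X ω, W ω, V ω)
  rw [mutualInfo_eq_entropy hp.1] at hXV ⊢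
  rw [condMutualInfo_eq_entropy hp.1] at hnonneg ⊢
  linarith

lemma condMutualInfo_comp_le_condMutualInfo (hp : IsPmf p) (U : Ω → δ) {W : Ω → β} {X : Ω → α}
    (g : α → γ) (hsuff : condMutualInfo p W X (fun ω => g (X ω)) = 0) :
    condMutualInfo p U W (fun ω => g (X ω)) ≤ condMutualInfo p U W X := by
  have hnonneg := condMutualInfo_nonneg hp W X fun ω => (U ω, g (X ω))
  have h1 : entropy p (fun ω => (X ω, g (X ω))) = entropy p X :=
    entropy_comp_of_injective (e := fun x => (x, g x))
      (Function.LeftInverse.injective (g := Prod.fst) fun _ => rfl) p X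
  have h2 : entropy p (fun ω => (W ω, X ω, g (X ω))) = entropy p (fun ω => (W ω, X ω)) :=
    entropy_comp_of_injective (e := fun x : β × α => (x.1, x.2, g x.2))
      (Function.LeftInverse.injective (g := fun y => (y.1, y.2.1)) fun _ => rfl) p
      fun ω => (W ω, X ω)
  have h3 : entropy p (fun ω => (X ω, U ω, g (X ω))) = entropy p (fun ω => (U ω, X ω)) :=
    entropy_comp_of_injective (e := fun x : δ × α => (x.2, x.1, g x.2))
      (Function.LeftInverse.injective (g := fun y => (y.2.1, y.1)) fun _ => rfl) p
      fun ω => (U ω, X ω)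
  have h4 : entropy p (fun ω => (W ω, X ω, U ω, g (X ω))) =
      entropy p (fun ω => (U ω, W ω, X ω)) :=
    entropy_comp_of_injective (e := fun x : δ × β × α => (x.2.1, x.2.2, x.1, g x.2.2))
      (Function.LeftInverse.injective (g := fun y => (y.2.2.1, y.1, y.2.1)) fun _ => rfl) p
      fun ω => (U ω, W ω, X ω)
  have h5 : entropy p (fun ω => (W ω, U ω, g (X ω))) =
      entropy p (fun ω => (U ω, W ω, g (X ω))) :=
    entropy_comp_of_injective (e := fun x : δ × β × γ => (x.2.1, x.1, x.2.2))
      (Function.LeftInverse.injective (g := fun y => (y.2.1, y.1, y.2.2)) fun _ => rfl) p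
      fun ω => (U ω, W ω, g (X ω))
  rw [condMutualInfo_eq_entropy hp.1] at hsuff hnonneg ⊢
  rw [condMutualInfo_eq_entropy hp.1]
  linarith

end Information

/-- if Z_s = f(X_s) is sufficient for Y, Z_sr coincides with Z_s almost
surely, and I(Z_se;Z_sr) = 0, then I(Z_se;Y|X_s) ≥ I(Z_se;Y). -/
theorem shape_erased_cmi_lower_bound
    {Ω A B C D : Type*} [Fintype Ω] [Fintype A] [Fintype B] [Fintype C] [Fintype D]
    [DecidableEq A] [DecidableEq B] [DecidableEq C] [DecidableEq D]
    (p : Ω → ℝ) (hp : IsPmf p) (Y : Ω → A) (Xs : Ω → B) (f : B → C)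
    (Zsr : Ω → C) (Zse : Ω → D)
    (hsuff : condMutualInfo p Y Xs (fun ω => f (Xs ω)) = 0)
    (hZsr : ∀ ω, 0 < p ω → Zsr ω = f (Xs ω))
    (hindep : mutualInfo p Zse Zsr = 0) :
    mutualInfo p Zse Y ≤ condMutualInfo p Zse Y Xs := by
  have hindep_Zs : mutualInfo p Zse (fun ω => f (Xs ω)) = 0 := by
    rwa [← mutualInfo_congr_ae_right hp.1 Zse hZsr]
  calc mutualInfo p Zse Y ≤ condMutualInfo p Zse Y (fun ω => f (Xs ω)) :=
        mutualInfo_le_condMutualInfo_of_mutualInfo_eq_zero hp Zse Y hindep_Zs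
    _ ≤ condMutualInfo p Zse Y Xs := condMutualInfo_comp_le_condMutualInfo hp Zse f hsuff
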